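/- Monotone integral bound used for Dudley's integral: for any c, R > 0 and D ≥ 1, ∫₀^R √(D·log(1 + c/t)) dt ≤ R·√(D·log(e·(1 + c/R))), where e is the natural exponent. -/

import Mathlib

open MeasureTheory Set Real

theorem dudley_integral_bound (c R D : ℝ) (hc : 0 < c) (hR : 0 < R) (hD : 1 ≤ D) :
    ∫ t in (0 : ℝ)..R, Real.sqrt (D * Real.log (1 + c / t)) ≤
      R * Real.sqrt (D * Real.log (Real.exp 1 * (1 + c / R))) := by
  have hD0 : (0:ℝ) ≤ D := le_trans zero_le_one hD
  have hcR : 0 < c / R := div_pos hc hR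
  set K := Real.log (1 + c / R) with hKdef
  have hK0 : 0 ≤ K := Real.log_nonneg (by linarith)
  -- measurability
  have hmeas : Measurable fun t : ℝ => Real.log (1 + c / t) :=
    Real.measurable_log.comp (measurable_const.add (measurable_const.div measurable_id))
  -- integrability of log on Ioc 0 R
  have hlogint : IntegrableOn Real.log (Ioc 0 R) volume := by
    have hbint : IntegrableOn (fun t : ℝ => 2 * t ^ (-(1/2) : ℝ) + |Real.log R|)
        (Ioc 0 R) volume := by
      apply Integrable.add
      · have h := (intervalIntegral.intervalIntegrable_rpow' (a := 0) (b := R)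
          (by norm_num : (-1:ℝ) < -(1/2)))
        rw [intervalIntegrable_iff_integrableOn_Ioc_of_le hR.le] at h
        exact h.const_mul 2
      · exact integrableOn_const (by simp [Real.volume_Ioc])
    apply hbint.mono' Real.measurable_log.aestronglyMeasurable.restrict
    rw [ae_restrict_iff' measurableSet_Ioc]
    filter_upwards with x hx
    have hx0 : 0 < x := hx.1
    have hsx : 0 < Real.sqrt x := Real.sqrt_pos.2 hx0
    have hxr : x ^ (-(1/2) : ℝ) = (Real.sqrt x)⁻¹ := by
      rw [Real.rpow_neg hx0.le, ← Real.sqrt_eq_rpow]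
    rcases le_or_gt x 1 with hx1 | hx1
    · have hneg : Real.log x ≤ 0 := Real.log_nonpos hx0.le hx1
      have h2 : Real.log (Real.sqrt x)⁻¹ ≤ (Real.sqrt x)⁻¹ - 1 :=
        Real.log_le_sub_one_of_pos (by positivity)
      have h3 : Real.log (Real.sqrt x)⁻¹ = -(Real.log x) / 2 := by
        rw [Real.log_inv, Real.log_sqrt hx0.le]; ring
      have habs : ‖Real.log x‖ = -Real.log x := by
        rw [Real.norm_eq_abs, abs_of_nonpos hneg]
      rw [habs, hxr]
      have : (0:ℝ) ≤ |Real.log R| := abs_nonneg _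
      have hinv : 0 < (Real.sqrt x)⁻¹ := by positivity
      linarith [h3 ▸ h2]
    · have hpos : 0 ≤ Real.log x := Real.log_nonneg hx1.le
      have : Real.log x ≤ |Real.log R| :=
        le_trans (Real.log_le_log hx0 hx.2) (le_abs_self _)
      have hrp : 0 ≤ 2 * x ^ (-(1/2) : ℝ) := by
        have := Real.rpow_nonneg hx0.le (-(1/2) : ℝ); linarith
      rw [Real.norm_eq_abs, abs_of_nonneg hpos]
      linarith
  -- value of the log integral
  have hlogval : ∫ t in (0:ℝ)..R, Real.log t = R * Real.log R - R := by
    have h := intervalIntegral.integral_eq_sub_of_hasDerivAt_of_le hR.le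
      (f := fun t => t * Real.log t - t) (f' := Real.log)
      ((Real.continuous_mul_log.sub continuous_id).continuousOn)
      (fun x hx => by
        exact ((Real.hasDerivAt_mul_log (ne_of_gt hx.1)).sub (hasDerivAt_id x)).congr_deriv (by ring))
      (by rw [intervalIntegrable_iff_integrableOn_Ioc_of_le hR.le]; exact hlogint)
    simpa using h
  -- pointwise bound : log (1 + c/x) ≤ K + (log R - log x) on Ioc 0 R
  have hkey : ∀ x ∈ Ioc (0:ℝ) R, Real.log (1 + c / x) ≤ K + (Real.log R - Real.log x) := by
    intro x hx
    have hx0 : 0 < x := hx.1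
    have h1 : (1 + c / R) * (R / x) = R / x + c / x := by
      field_simp
    have h2 : (1:ℝ) + c / x ≤ (1 + c / R) * (R / x) := by
      rw [h1]
      have : (1:ℝ) ≤ R / x := (one_le_div hx0).2 hx.2
      linarith
    calc Real.log (1 + c / x) ≤ Real.log ((1 + c / R) * (R / x)) :=
          Real.log_le_log (by positivity) h2
      _ = K + (Real.log R - Real.log x) := by
          rw [Real.log_mul (by positivity) (by positivity),
            Real.log_div (ne_of_gt hR) (ne_of_gt hx0)]
  -- nonnegativity on the set
  have hnn : ∀ x ∈ Ioc (0:ℝ) R, 0 ≤ Real.log (1 + c / x) := fun x hx =>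
    Real.log_nonneg (by nlinarith [div_pos hc hx.1])
  -- integrability of the bound B
  have hBint : IntegrableOn (fun t : ℝ => K + Real.log R - Real.log t) (Ioc 0 R) volume := by
    exact (integrableOn_const (by simp [Real.volume_Ioc])).sub hlogint
  -- integrability of g := log(1 + c/·)
  have hgint : IntegrableOn (fun t : ℝ => Real.log (1 + c / t)) (Ioc 0 R) volume := by
    apply hBint.mono' hmeas.aestronglyMeasurable.restrict
    rw [ae_restrict_iff' measurableSet_Ioc]
    filter_upwards with x hx
    rw [Real.norm_eq_abs, abs_of_nonneg (hnn x hx)]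
    have := hkey x hx
    linarith
  -- value of integral of B
  have hBval : ∫ t in Ioc (0:ℝ) R, (K + Real.log R - Real.log t) = K * R + R := by
    rw [integral_sub (integrableOn_const (by simp [Real.volume_Ioc]) :
      IntegrableOn (fun _ => K + Real.log R) (Ioc 0 R) volume) hlogint]
    rw [setIntegral_const]
    rw [← intervalIntegral.integral_of_le hR.le, hlogval]
    simp [Real.volume_Ioc, ENNReal.toReal_ofReal hR.le, hR.le]
    ring
  -- bound on integral of g
  have hgbound : ∫ t in Ioc (0:ℝ) R, Real.log (1 + c / t) ≤ K * R + R := by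
    rw [← hBval]
    apply setIntegral_mono_on hgint hBint measurableSet_Ioc
    intro x hx
    have := hkey x hx; linarith
  -- integrability of f := D * g and of sqrt ∘ f
  have hfi : IntegrableOn (fun t : ℝ => D * Real.log (1 + c / t)) (Ioc 0 R) volume :=
    hgint.const_mul D
  have hsqrt_le : ∀ y : ℝ, 0 ≤ y → Real.sqrt y ≤ y + 1 := by
    intro y hy
    nlinarith [Real.sq_sqrt hy, Real.sqrt_nonneg y]
  have hgi : IntegrableOn (fun t : ℝ => Real.sqrt (D * Real.log (1 + c / t)))
      (Ioc 0 R) volume := by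
    have hcint : IntegrableOn (fun _ : ℝ => (1:ℝ)) (Ioc 0 R) volume :=
      integrableOn_const (by simp [Real.volume_Ioc])
    have hsum : IntegrableOn (fun t : ℝ => D * Real.log (1 + c / t) + 1) (Ioc 0 R) volume :=
      hfi.add hcint
    apply hsum.mono'
    · exact ((measurable_const.mul hmeas).sqrt).aestronglyMeasurable.restrict
    · rw [ae_restrict_iff' measurableSet_Ioc]
      filter_upwards with x hx
      rw [Real.norm_eq_abs, abs_of_nonneg (Real.sqrt_nonneg _)]
      exact hsqrt_le _ (mul_nonneg hD0 (hnn x hx))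
  -- Jensen
  have h0 : volume (Ioc (0:ℝ) R) ≠ 0 := by simp [Real.volume_Ioc, hR]
  have htop : volume (Ioc (0:ℝ) R) ≠ ⊤ := by simp [Real.volume_Ioc]
  have hae : ∀ᵐ x ∂volume.restrict (Ioc (0:ℝ) R),
      (fun t : ℝ => D * Real.log (1 + c / t)) x ∈ Ici (0:ℝ) := by
    rw [ae_restrict_iff' measurableSet_Ioc]
    filter_upwards with x hx
    exact mul_nonneg hD0 (hnn x hx)
  have hjensen := Real.strictConcaveOn_sqrt.concaveOn.le_map_set_average
    (Real.continuous_sqrt.continuousOn) isClosed_Ici h0 htop hae hfi hgi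
  -- translate averages
  have hvol : volume.real (Ioc (0:ℝ) R) = R := by
    simp [Measure.real, Real.volume_Ioc, ENNReal.toReal_ofReal hR.le]
  rw [setAverage_eq, setAverage_eq, hvol] at hjensen
  -- bound inner average
  have havg : R⁻¹ • ∫ t in Ioc (0:ℝ) R, D * Real.log (1 + c / t) ≤ D * (K + 1) := by
    rw [integral_const_mul, smul_eq_mul]
    have h1 : D * ∫ t in Ioc (0:ℝ) R, Real.log (1 + c / t) ≤ D * (K * R + R) :=
      mul_le_mul_of_nonneg_left hgbound hD0
    calc R⁻¹ * (D * ∫ t in Ioc (0:ℝ) R, Real.log (1 + c / t))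
        ≤ R⁻¹ * (D * (K * R + R)) := by
          apply mul_le_mul_of_nonneg_left h1 (by positivity)
      _ = D * (K + 1) := by field_simp
  -- final RHS simplification
  have hRHS : Real.log (Real.exp 1 * (1 + c / R)) = K + 1 := by
    rw [Real.log_mul (Real.exp_ne_zero 1) (by positivity), Real.log_exp]; ring
  -- put everything together
  rw [intervalIntegral.integral_of_le hR.le]
  have hmain : ∫ t in Ioc (0:ℝ) R, Real.sqrt (D * Real.log (1 + c / t))
      ≤ R * Real.sqrt (D * (K + 1)) := by
    have h2 : (fun x => Real.sqrt x) (R⁻¹ • ∫ t in Ioc (0:ℝ) R, D * Real.log (1 + c / t))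
        ≤ Real.sqrt (D * (K + 1)) := Real.sqrt_le_sqrt havg
    have h3 : R⁻¹ • ∫ t in Ioc (0:ℝ) R, Real.sqrt (D * Real.log (1 + c / t))
        ≤ Real.sqrt (D * (K + 1)) := le_trans hjensen h2
    rw [smul_eq_mul] at h3
    calc ∫ t in Ioc (0:ℝ) R, Real.sqrt (D * Real.log (1 + c / t))
        = R * (R⁻¹ * ∫ t in Ioc (0:ℝ) R, Real.sqrt (D * Real.log (1 + c / t))) := by
          field_simp
      _ ≤ R * Real.sqrt (D * (K + 1)) := mul_le_mul_of_nonneg_left h3 hR.le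
  rw [hRHS]
  exact hmain
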